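/- arXiv:1310.0309 — 6 statements merged into one kernel-verified Lean document; each statement's English description precedes it below -/
import Mathlib

section
/- Let β > 1 be a real number and suppose the Rényi expansion of 1 in base β is ultimately periodic, say d*_β(1) = u v^ω with v nonempty. Set k = |u| + |v|. Then for every infinite binary word w of the form 0^{n_1} 1 0^{n_2} 1 0^{n_3} ⋯ with n_i ≥ k for all i ≥ 1, the word w is the β-expansion of some real number x ∈ [0,1); that is, every shift σ^m(w) is lexicographically smaller than d*_β(1). -/
/-- Strict lexicographic order on infinite words over ℕ. -/
def LexLT (a b : ℕ → ℕ) : Prop := ∃ p, (∀ i < p, a i = b i) ∧ a p < b p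

/-- Non-strict lexicographic order. -/
def LexLE (a b : ℕ → ℕ) : Prop := a = b ∨ LexLT a b

/-- `d` is the Rényi (quasi-greedy) expansion of 1 in base β: a word over
{0,...,⌈β⌉-1} not ending in 0^ω, of value 1, lexicographically greatest among such. -/
def IsRenyiExpansionOfOne (β : ℝ) (d : ℕ → ℕ) : Prop :=
  (∀ i, d i ≤ ⌈β⌉₊ - 1) ∧
  HasSum (fun i : ℕ => (d i : ℝ) / β ^ (i + 1)) 1 ∧
  (∀ N, ∃ i ≥ N, d i ≠ 0) ∧
  ∀ d' : ℕ → ℕ, (∀ i, d' i ≤ ⌈β⌉₊ - 1) →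
    HasSum (fun i : ℕ => (d' i : ℝ) / β ^ (i + 1)) 1 →
    (∀ N, ∃ i ≥ N, d' i ≠ 0) → LexLE d' d

/-!
Since `d*_β(1) = u v^ω` does not end in `0^ω`, its period `v` contains a nonzero digit, so every
block of `k = |u| + |v|` consecutive digits of `d*_β(1)` contains a nonzero digit; its first digit
is nonzero as well, because it dominates the first digit `⌈β⌉ - 1` of the quasi-greedy expansion.
Now compare a shift of `w` with `d*_β(1)` at their first difference `p`. Were the shift `1` and
`d*_β(1)` `0` there, the nonzero digit of `d*_β(1)` among the `k` positions before `p` (or at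
position `0`) would be a `1` of the shift too, giving two `1`s of `w` at distance at most `k`.
The same argument rules out equality.
-/

/-- Quasi-greedy algorithm for expanding `1` in base `β`: taking the digit `⌈β r⌉ - 1` rather than
`⌊β r⌋` keeps the remainder `r` in `(0, 1]`, so the expansion never ends in `0^ω`. -/
noncomputable def quasiGreedyRem (β : ℝ) : ℕ → ℝ
  | 0 => 1
  | n + 1 => β * quasiGreedyRem β n - ((⌈β * quasiGreedyRem β n⌉₊ - 1 : ℕ) : ℝ)

noncomputable def quasiGreedyDigit (β : ℝ) (n : ℕ) : ℕ := ⌈β * quasiGreedyRem β n⌉₊ - 1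

namespace QuasiGreedy

variable {β : ℝ}

theorem rem_succ (n : ℕ) :
    quasiGreedyRem β (n + 1) = β * quasiGreedyRem β n - quasiGreedyDigit β n := rfl

theorem rem_mem_Ioc (hβ : 1 < β) (n : ℕ) : quasiGreedyRem β n ∈ Set.Ioc 0 1 := by
  induction n with
  | zero => simp [quasiGreedyRem]
  | succ n ih =>
    have hx : 0 < β * quasiGreedyRem β n := mul_pos (by linarith) ih.1
    have hceil : (1 : ℝ) ≤ ⌈β * quasiGreedyRem β n⌉₊ := by exact_mod_cast Nat.ceil_pos.mpr hx
    have h1 := Nat.le_ceil (β * quasiGreedyRem β n)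
    have h2 := Nat.ceil_lt_add_one hx.le
    rw [rem_succ, quasiGreedyDigit, Nat.cast_sub (by exact_mod_cast hceil), Nat.cast_one]
    constructor <;> linarith

theorem digit_le (hβ : 1 < β) (n : ℕ) : quasiGreedyDigit β n ≤ ⌈β⌉₊ - 1 :=
  Nat.sub_le_sub_right (Nat.ceil_mono
    (mul_le_of_le_one_right (by linarith) (rem_mem_Ioc hβ n).2)) 1

theorem digit_zero : quasiGreedyDigit β 0 = ⌈β⌉₊ - 1 := by
  simp [quasiGreedyDigit, quasiGreedyRem]

theorem sum_range_digit (hβ : 1 < β) (n : ℕ) :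
    ∑ i ∈ Finset.range n, (quasiGreedyDigit β i : ℝ) / β ^ (i + 1) =
      1 - quasiGreedyRem β n / β ^ n := by
  induction n with
  | zero => simp [quasiGreedyRem]
  | succ n ih =>
    have : β ^ n ≠ 0 := pow_ne_zero _ (by linarith)
    rw [Finset.sum_range_succ, ih, rem_succ]
    field_simp
    ring

theorem hasSum_digit (hβ : 1 < β) :
    HasSum (fun i ↦ (quasiGreedyDigit β i : ℝ) / β ^ (i + 1)) 1 := by
  have hβ0 : 0 < β := by linarith
  rw [hasSum_iff_tendsto_nat_of_nonneg (fun i ↦ by positivity)]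
  have hrem : Filter.Tendsto (fun n ↦ quasiGreedyRem β n / β ^ n) Filter.atTop (nhds 0) := by
    refine squeeze_zero (fun n ↦ div_nonneg (rem_mem_Ioc hβ n).1.le (by positivity))
      (fun n ↦ ?_) (tendsto_pow_atTop_nhds_zero_of_lt_one (inv_nonneg.mpr hβ0.le)
        (inv_lt_one_of_one_lt₀ hβ))
    rw [inv_pow, ← one_div]
    gcongr
    exact (rem_mem_Ioc hβ n).2
  simpa [sum_range_digit hβ] using (tendsto_const_nhds (x := (1 : ℝ))).sub hrem

theorem exists_digit_ne_zero (hβ : 1 < β) (N : ℕ) : ∃ i ≥ N, quasiGreedyDigit β i ≠ 0 := by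
  by_contra! h
  have hgrow : ∀ j, quasiGreedyRem β (N + j) = β ^ j * quasiGreedyRem β N := by
    intro j
    induction j with
    | zero => simp
    | succ j ih => rw [← add_assoc, rem_succ, h _ (by omega), ih]; push_cast; ring
  have hN := (rem_mem_Ioc hβ N).1
  obtain ⟨j, hj⟩ := pow_unbounded_of_one_lt (quasiGreedyRem β N)⁻¹ hβ
  have hle := (rem_mem_Ioc hβ (N + j)).2
  have hgt := mul_lt_mul_of_pos_right hj hN
  rw [inv_mul_cancel₀ hN.ne', ← hgrow] at hgt
  linarith

end QuasiGreedy

theorem LexLE.apply_zero_le {a b : ℕ → ℕ} (h : LexLE a b) : a 0 ≤ b 0 := by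
  rcases h with rfl | ⟨p, hagree, hlt⟩
  · rfl
  · rcases Nat.eq_zero_or_pos p with rfl | hp
    · exact hlt.le
    · exact (hagree 0 hp).le

theorem IsRenyiExpansionOfOne.apply_zero_ne_zero {β : ℝ} (hβ : 1 < β) {d : ℕ → ℕ}
    (hd : IsRenyiExpansionOfOne β d) : d 0 ≠ 0 := by
  have hle := (hd.2.2.2 _ (QuasiGreedy.digit_le hβ) (QuasiGreedy.hasSum_digit hβ)
    (QuasiGreedy.exists_digit_ne_zero hβ)).apply_zero_le
  have : 1 < ⌈β⌉₊ := Nat.lt_ceil.mpr (by exact_mod_cast hβ)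
  rw [QuasiGreedy.digit_zero] at hle
  omega

theorem apply_add_mul_of_periodic {d : ℕ → ℕ} {up vp : ℕ}
    (hper : ∀ i, up ≤ i → d (i + vp) = d i) {i : ℕ} (hi : up ≤ i) (s : ℕ) :
    d (i + s * vp) = d i := by
  induction s with
  | zero => simp
  | succ s ih => rw [add_mul, one_mul, ← add_assoc, hper _ (by omega), ih]

theorem exists_ne_zero_of_periodic {d : ℕ → ℕ} {up vp : ℕ} (hvp : 1 ≤ vp)
    (hper : ∀ i, up ≤ i → d (i + vp) = d i) (hnz : ∀ N, ∃ i ≥ N, d i ≠ 0) (t : ℕ) :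
    ∃ p, t ≤ p ∧ p < t + (up + vp) ∧ d p ≠ 0 := by
  obtain ⟨q, hqup, hqlt, hq⟩ : ∃ q, up ≤ q ∧ q < up + vp ∧ d q ≠ 0 := by
    obtain ⟨j, hj, hdj⟩ := hnz up
    have hmod := Nat.mod_lt (j - up) hvp
    refine ⟨up + (j - up) % vp, by omega, by omega, ?_⟩
    rwa [← apply_add_mul_of_periodic hper (le_add_right le_rfl) ((j - up) / vp), add_assoc,
      Nat.mod_add_div', Nat.add_sub_cancel' hj]
  induction t with
  | zero => exact ⟨q, by omega, by omega, hq⟩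
  | succ t ih =>
    obtain ⟨p, htp, hpt, hp⟩ := ih
    by_cases htp' : t < p
    · exact ⟨p, htp', by omega, hp⟩
    by_cases hpup : p < up
    · exact ⟨q, by omega, by omega, hq⟩
    · exact ⟨p + vp, by omega, by omega, by rwa [hper p (by omega)]⟩

theorem lexLT_of_sparse_binary {u d : ℕ → ℕ} {k : ℕ} (hu : ∀ i, u i ≤ 1)
    (hgap : ∀ i j, u i = 1 → u j = 1 → i < j → i + k < j) (hd0 : d 0 ≠ 0)
    (hblock : ∀ t, ∃ p, t ≤ p ∧ p < t + k ∧ d p ≠ 0) : LexLT u d := by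
  have hone : ∀ i, u i = d i → d i ≠ 0 → u i = 1 := fun i h h' ↦ by have := hu i; omega
  have hne : ∃ i, u i ≠ d i := by
    by_contra! heq
    obtain ⟨p, hp1, hpk, hp⟩ := hblock 1
    have := hgap 0 p (hone 0 (heq 0) hd0) (hone p (heq p) hp) (by omega)
    omega
  have hagree : ∀ i < Nat.find hne, u i = d i := fun i hi ↦ not_not.mp (Nat.find_min hne hi)
  refine ⟨Nat.find hne, hagree, ?_⟩
  set p := Nat.find hne
  have hp : u p ≠ d p := Nat.find_spec hne
  by_contra! hle
  have hup : u p = 1 := by have := hu p; omega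
  have hdp : d p = 0 := by have := hu p; omega
  obtain ⟨q, hqp, hpq, hq⟩ : ∃ q < p, p ≤ q + k ∧ d q ≠ 0 := by
    by_cases hpk : p < k
    · exact ⟨0, Nat.pos_of_ne_zero fun h ↦ hd0 (h ▸ hdp), by omega, hd0⟩
    · obtain ⟨q, h1, h2, h3⟩ := hblock (p - k)
      exact ⟨q, by omega, by omega, h3⟩
  have := hgap q p (hone q (hagree q hqp) hq) hup hqp
  omega

theorem stmt1_general (β : ℝ) (hβ : 1 < β) (d : ℕ → ℕ) (hd : IsRenyiExpansionOfOne β d)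
    (up vp : ℕ) (hvp : 1 ≤ vp) (hper : ∀ i, up ≤ i → d (i + vp) = d i)
    (k : ℕ) (hk : k = up + vp)
    (w : ℕ → ℕ) (hw01 : ∀ i, w i ≤ 1)
    (hgap : ∀ i j, w i = 1 → w j = 1 → i < j → i + k < j) :
    ∀ m, LexLT (fun i => w (m + i)) d := by
  subst hk
  intro m
  exact lexLT_of_sparse_binary (fun i ↦ hw01 (m + i))
    (fun i j hi hj hij ↦ by have := hgap (m + i) (m + j) hi hj (by omega); omega)
    (hd.apply_zero_ne_zero hβ) (exists_ne_zero_of_periodic hvp hper hd.2.2.1)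

/-- if d*_β(1) = u v^ω is ultimately periodic (preperiod `up`, period
`vp ≥ 1`) and k = up + vp, then every binary word of the form 0^{n₁}10^{n₂}10^{n₃}⋯
with all nᵢ ≥ k has all of its shifts lexicographically smaller than d*_β(1),
i.e. it is the β-expansion of some real in [0,1). -/
theorem stmt1 (β : ℝ) (hβ : 1 < β) (d : ℕ → ℕ) (hd : IsRenyiExpansionOfOne β d)
    (up vp : ℕ) (hvp : 1 ≤ vp) (hper : ∀ i, up ≤ i → d (i + vp) = d i)
    (k : ℕ) (hk : k = up + vp)
    (w : ℕ → ℕ) (hw01 : ∀ i, w i ≤ 1)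
    (hfirst : ∀ i, w i = 1 → k ≤ i)
    (hgap : ∀ i j, w i = 1 → w j = 1 → i < j → i + k < j)
    (hinf : ∀ N, ∃ i ≥ N, w i = 1) :
    ∀ m, LexLT (fun i => w (m + i)) d :=
  stmt1_general β hβ d hd up vp hvp hper k hk w hw01 hgap
end

section
/- Let β > 1 be a Pisot number and let c ≥ 1 be an integer. Then the set C[β] ∩ [-c/(β-1), c/(β-1)] is finite, where C[β] = { Σ_{i=0}^n a_i β^i : n ≥ 0, a_i ∈ {-c,...,c} } is the set of values of polynomials in β with integer coefficients of absolute value at most c. -/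
/-! Let `K = ℚ(β)`. A sum `x = Σ aᵢ βⁱ` with `|aᵢ| ≤ c` is an algebraic integer of `K`. Under an
embedding `φ : K → ℂ` with `φ β ≠ β`, `φ x = Σ aᵢ (φ β)ⁱ` has modulus at most `c / (1 - |φ β|)`
because `|φ β| < 1`; under the remaining embeddings `φ x = x`. So if `|x|` is bounded, all
conjugates of `x` are uniformly bounded, and there are only finitely many such algebraic
integers in a number field. -/

def IsPisot (β : ℝ) : Prop :=
  1 < β ∧ IsIntegral ℤ β ∧
    ∀ z : ℂ, Polynomial.aeval z (minpoly ℤ β) = 0 → z ≠ (β : ℂ) → ‖z‖ < 1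

open Finset Polynomial IntermediateField

def digitSums {R : Type*} [Ring R] (θ : R) (c : ℤ) : Set R :=
  {x | ∃ (m : ℕ) (a : ℕ → ℤ), (∀ i, |a i| ≤ c) ∧ x = ∑ i ∈ range m, (a i : R) * θ ^ i}

section digitSums

variable {R S F : Type*} [Ring R] [Ring S] [FunLike F R S] [RingHomClass F R S]

lemma map_sum_intCast_mul_pow (f : F) (θ : R) (m : ℕ) (a : ℕ → ℤ) :
    f (∑ i ∈ range m, (a i : R) * θ ^ i) = ∑ i ∈ range m, (a i : S) * f θ ^ i := by
  simp

lemma image_digitSums (f : F) (θ : R) (c : ℤ) : f '' digitSums θ c = digitSums (f θ) c := by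
  ext y
  constructor
  · rintro ⟨x, ⟨m, a, ha, rfl⟩, rfl⟩
    exact ⟨m, a, ha, map_sum_intCast_mul_pow f θ m a⟩
  · rintro ⟨m, a, ha, rfl⟩
    exact ⟨_, ⟨m, a, ha, rfl⟩, map_sum_intCast_mul_pow f θ m a⟩

end digitSums

lemma isIntegral_of_mem_digitSums {R : Type*} [CommRing R] {θ : R} (hθ : IsIntegral ℤ θ)
    {c : ℤ} {x : R} (hx : x ∈ digitSums θ c) : IsIntegral ℤ x := by
  obtain ⟨m, a, -, rfl⟩ := hx
  exact IsIntegral.sum _ fun i _ => (isIntegral_algebraMap (x := a i)).mul (hθ.pow i)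

lemma norm_le_of_mem_digitSums {z : ℂ} (hz : ‖z‖ < 1) {c : ℤ} {x : ℂ}
    (hx : x ∈ digitSums z c) : ‖x‖ ≤ c / (1 - ‖z‖) := by
  obtain ⟨m, a, ha, rfl⟩ := hx
  have hc : (0 : ℝ) ≤ c := by exact_mod_cast (abs_nonneg _).trans (ha 0)
  calc ‖∑ i ∈ range m, (a i : ℂ) * z ^ i‖
      ≤ ∑ i ∈ range m, ‖(a i : ℂ) * z ^ i‖ := norm_sum_le _ _
    _ ≤ ∑ i ∈ range m, (c : ℝ) * ‖z‖ ^ i := by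
        gcongr with i
        rw [norm_mul, norm_pow, Complex.norm_intCast]
        gcongr
        exact_mod_cast ha i
    _ = c * ∑ i ∈ range m, ‖z‖ ^ i := (mul_sum _ _ _).symm
    _ ≤ c * (1 / (1 - ‖z‖)) := by
        gcongr
        simpa using geom_sum_Ico_le_of_lt_one (m := 0) (n := m) (norm_nonneg z) hz
    _ = c / (1 - ‖z‖) := mul_one_div _ _

theorem finite_digitSums_inter_norm_le {K : Type*} [Field K] [NumberField K] {θ : K}
    (hθ : IsIntegral ℤ θ) (v : K →+* ℂ) (hconj : ∀ φ : K →+* ℂ, φ θ ≠ v θ → ‖φ θ‖ < 1)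
    (c : ℤ) (R : ℝ) : {x ∈ digitSums θ c | ‖v x‖ ≤ R}.Finite := by
  let B : ℝ := max R (⨆ φ : K →+* ℂ, (c : ℝ) / (1 - ‖φ θ‖))
  refine (NumberField.Embeddings.finite_of_norm_le K ℂ B).subset ?_
  rintro x ⟨hx, hvx⟩
  refine ⟨isIntegral_of_mem_digitSums hθ hx, fun φ => ?_⟩
  by_cases hφ : φ θ = v θ
  · have hφx : φ x = v x := by
      obtain ⟨m, a, -, rfl⟩ := hx
      simp only [map_sum_intCast_mul_pow, hφ]
    exact hφx ▸ hvx.trans (le_max_left _ _)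
  · have hφx : φ x ∈ digitSums (φ θ) c := image_digitSums φ θ c ▸ Set.mem_image_of_mem φ hx
    calc ‖φ x‖ ≤ c / (1 - ‖φ θ‖) := norm_le_of_mem_digitSums (hconj φ hφ) hφx
      _ ≤ ⨆ ψ : K →+* ℂ, (c : ℝ) / (1 - ‖ψ θ‖) :=
          le_ciSup (f := fun ψ : K →+* ℂ => (c : ℝ) / (1 - ‖ψ θ‖)) (Set.finite_range _).bddAbove φ
      _ ≤ B := le_max_right _ _

lemma aeval_map_minpoly {A B : Type*} [CommRing A] [CommRing B] (φ : A →+* B) (x : A) :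
    aeval (φ x) (minpoly ℤ x) = 0 := by
  rw [← φ.toIntAlgHom_apply, aeval_algHom_apply, minpoly.aeval, map_zero]

theorem finite_digitSums_inter_abs_le {β : ℝ} (hβ : IsIntegral ℤ β)
    (hconj : ∀ z : ℂ, aeval z (minpoly ℤ β) = 0 → z ≠ β → ‖z‖ < 1) (c : ℤ) (R : ℝ) :
    {x ∈ digitSums β c | |x| ≤ R}.Finite := by
  let K := ℚ⟮β⟯
  have : FiniteDimensional ℚ K := adjoin.finiteDimensional hβ.tower_top
  have : NumberField K := ⟨⟩
  let β' : K := AdjoinSimple.gen ℚ β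
  have hinj : Function.Injective (algebraMap K ℝ) := (algebraMap K ℝ).injective
  have hβ' : IsIntegral ℤ β' := by
    rwa [← isIntegral_algebraMap_iff hinj, AdjoinSimple.algebraMap_gen]
  let v : K →+* ℂ := Complex.ofRealHom.comp (algebraMap K ℝ)
  have hvβ' : v β' = β := congrArg Complex.ofReal (AdjoinSimple.algebraMap_gen ℚ β)
  have hconj' (φ : K →+* ℂ) (hφ : φ β' ≠ v β') : ‖φ β'‖ < 1 := by
    refine hconj _ ?_ (hvβ' ▸ hφ)
    rw [← AdjoinSimple.algebraMap_gen ℚ β, minpoly.algebraMap_eq hinj]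
    exact aeval_map_minpoly φ β'
  refine ((finite_digitSums_inter_norm_le hβ' v hconj' c R).image (algebraMap K ℝ)).subset ?_
  rintro x ⟨hx, hxR⟩
  rw [← AdjoinSimple.algebraMap_gen ℚ β, ← image_digitSums] at hx
  obtain ⟨y, hy, rfl⟩ := hx
  refine ⟨y, ⟨hy, ?_⟩, rfl⟩
  simpa [v] using hxR

theorem stmt3_general (β : ℝ) (hβ : IsPisot β) (c : ℤ) :
    Set.Finite
      ({x : ℝ | ∃ (m : ℕ) (a : ℕ → ℤ), (∀ i, |a i| ≤ c) ∧
          x = ∑ i ∈ Finset.range m, (a i : ℝ) * β ^ i} ∩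
        Set.Icc (-((c : ℝ) / (β - 1))) ((c : ℝ) / (β - 1))) := by
  obtain ⟨-, hint, hconj⟩ := hβ
  refine (finite_digitSums_inter_abs_le hint hconj c (c / (β - 1))).subset ?_
  rintro x ⟨hx, hxI⟩
  exact ⟨hx, abs_le.2 hxI⟩

/-- Berend–Frougny: for β Pisot and c ≥ 1, the set of values of
polynomials in β with integer coefficients of absolute value ≤ c that lie in
[-c/(β-1), c/(β-1)] is finite. -/
theorem stmt3 (β : ℝ) (hβ : IsPisot β) (c : ℤ) (hc : 1 ≤ c) :
    Set.Finite
      ({x : ℝ | ∃ (m : ℕ) (a : ℕ → ℤ), (∀ i, |a i| ≤ c) ∧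
          x = ∑ i ∈ Finset.range m, (a i : ℝ) * β ^ i} ∩
        Set.Icc (-((c : ℝ) / (β - 1))) ((c : ℝ) / (β - 1))) :=
  stmt3_general β hβ c
end

section
/- Let β > 1 be a real number, c ≥ 1 an integer, and suppose the set C[β] ∩ [-c/(β-1), c/(β-1)] is finite for every integer c ≥ 1, where C[β] is the set of polynomial values in β with coefficients in {-c,...,c}. Then β is an algebraic number. -/
/-!
Iterate the β-transformation `x ↦ fract (β x)` starting from `1`. Every iterate lies in `[0, 1]`
and equals `P_j(β)` for a monic integer polynomial `P_j` of degree `j` whose coefficients are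
bounded by `⌊β⌋` (each step multiplies by `X` and subtracts a digit in `[0, ⌊β⌋]`). Finiteness
forces two iterates to coincide, `P_m(β) = P_n(β)` with `m < n`, and `P_n - P_m` is monic, so
`β` is even an algebraic integer.
-/

open Polynomial

/-- The set `C[β]` of the paper, for the digit bound `c`. -/
def boundedPolyValues (β : ℝ) (c : ℤ) : Set ℝ :=
  {x | ∃ (m : ℕ) (a : ℕ → ℤ), (∀ i, |a i| ≤ c) ∧ x = ∑ i ∈ Finset.range m, (a i : ℝ) * β ^ i}

theorem aeval_mem_boundedPolyValues {β : ℝ} {c : ℤ} {p : ℤ[X]} (hp : ∀ i, |p.coeff i| ≤ c) :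
    aeval β p ∈ boundedPolyValues β c :=
  ⟨p.natDegree + 1, p.coeff, hp, by simp [aeval_eq_sum_range]⟩

/-- `aeval β (betaOrbitPoly β j)` is the `j`-th iterate of `1` under the β-transformation
`x ↦ fract (β * x)`; the polynomial records the digits subtracted along the way. -/
noncomputable def betaOrbitPoly (β : ℝ) : ℕ → ℤ[X]
  | 0 => 1
  | j + 1 => X * betaOrbitPoly β j - C ⌊β * aeval β (betaOrbitPoly β j)⌋

namespace betaOrbitPoly

variable {β : ℝ}

theorem aeval_succ (j : ℕ) :
    aeval β (betaOrbitPoly β (j + 1)) = Int.fract (β * aeval β (betaOrbitPoly β j)) := by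
  simp [betaOrbitPoly, Int.self_sub_floor]

theorem aeval_mem_Icc (j : ℕ) : aeval β (betaOrbitPoly β j) ∈ Set.Icc 0 1 := by
  cases j with
  | zero => simp [betaOrbitPoly]
  | succ j => rw [aeval_succ]; exact ⟨Int.fract_nonneg _, (Int.fract_lt_one _).le⟩

theorem monic_natDegree (j : ℕ) :
    (betaOrbitPoly β j).Monic ∧ (betaOrbitPoly β j).natDegree = j := by
  induction j with
  | zero => simp [betaOrbitPoly]
  | succ j ih =>
    obtain ⟨hmonic, hdeg⟩ := ih
    have hXmul : (X * betaOrbitPoly β j).Monic := monic_X.mul hmonic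
    have hXmul_deg : (X * betaOrbitPoly β j).natDegree = j + 1 := by
      rw [natDegree_X_mul hmonic.ne_zero, hdeg]
    refine ⟨hXmul.sub_of_left (degree_lt_degree ?_), ?_⟩
    · rw [natDegree_C, hXmul_deg]; omega
    · rw [betaOrbitPoly, natDegree_sub_C, hXmul_deg]

theorem abs_coeff_le (hβ : 1 ≤ β) (j i : ℕ) : |(betaOrbitPoly β j).coeff i| ≤ ⌊β⌋ := by
  have hfloor : 1 ≤ ⌊β⌋ := Int.le_floor.mpr (by exact_mod_cast hβ)
  induction j generalizing i with
  | zero =>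
    simp only [betaOrbitPoly, coeff_one]
    split_ifs <;> simp only [abs_one, abs_zero] <;> omega
  | succ j ih =>
    have hdigit_nonneg : 0 ≤ ⌊β * aeval β (betaOrbitPoly β j)⌋ :=
      Int.floor_nonneg.mpr (mul_nonneg (by linarith) (aeval_mem_Icc j).1)
    have hdigit_le : ⌊β * aeval β (betaOrbitPoly β j)⌋ ≤ ⌊β⌋ :=
      Int.floor_mono (mul_le_of_le_one_right (by linarith) (aeval_mem_Icc j).2)
    cases i with
    | zero => simp [betaOrbitPoly, abs_of_nonneg hdigit_nonneg, hdigit_le]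
    | succ i =>
      simpa only [betaOrbitPoly, coeff_sub, coeff_X_mul, coeff_C_succ, sub_zero] using ih i

theorem isIntegral_of_aeval_eq {m n : ℕ} (hmn : m < n)
    (h : aeval β (betaOrbitPoly β m) = aeval β (betaOrbitPoly β n)) : IsIntegral ℤ β := by
  obtain ⟨hmonic_n, hdeg_n⟩ := monic_natDegree (β := β) n
  obtain ⟨hmonic_m, hdeg_m⟩ := monic_natDegree (β := β) m
  refine ⟨_, hmonic_n.sub_of_left (degree_lt_degree (hdeg_m ▸ hdeg_n ▸ hmn)), ?_⟩
  rw [← aeval_def, map_sub, h, sub_self]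

end betaOrbitPoly

/-- if for every c ≥ 1 the set C[β] ∩ [-c/(β-1), c/(β-1)] is finite,
then β is algebraic. -/
theorem stmt4 (β : ℝ) (hβ : 1 < β)
    (hfin : ∀ c : ℤ, 1 ≤ c →
      Set.Finite
        ({x : ℝ | ∃ (m : ℕ) (a : ℕ → ℤ), (∀ i, |a i| ≤ c) ∧
            x = ∑ i ∈ Finset.range m, (a i : ℝ) * β ^ i} ∩
          Set.Icc (-((c : ℝ) / (β - 1))) ((c : ℝ) / (β - 1)))) :
    IsAlgebraic ℚ β := by
  have hc : 1 ≤ ⌊β⌋ := Int.le_floor.mpr (by exact_mod_cast hβ.le)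
  have hmem (j : ℕ) : aeval β (betaOrbitPoly β j) ∈ boundedPolyValues β ⌊β⌋ ∩
      Set.Icc (-((⌊β⌋ : ℝ) / (β - 1))) ((⌊β⌋ : ℝ) / (β - 1)) := by
    obtain ⟨h0, h1⟩ := betaOrbitPoly.aeval_mem_Icc (β := β) j
    have hone : 1 ≤ (⌊β⌋ : ℝ) / (β - 1) :=
      (one_le_div (by linarith)).mpr (by linarith [Int.lt_floor_add_one β])
    exact ⟨aeval_mem_boundedPolyValues (betaOrbitPoly.abs_coeff_le hβ.le j),
      by linarith, by linarith⟩
  obtain ⟨m, n, hmn, heq⟩ := (hfin ⌊β⌋ hc).exists_lt_map_eq_of_forall_mem hmem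
  exact (betaOrbitPoly.isIntegral_of_aeval_eq hmn heq).tower_top.isAlgebraic
end

section
/- Let (V, E) be a finite directed graph in which every vertex has at least one outgoing edge, and for each edge e from u to v let S_e : ℝ^n → ℝ^n be a contracting similarity with ratio r_e < 1. Then there exists a unique family (K_v)_{v ∈ V} of nonempty compact subsets of ℝ^n such that for every vertex u, K_u = ⋃_{v ∈ V} ⋃_{e ∈ E_{uv}} S_e(K_v). -/
/-!
The Hutchinson operator `K ↦ (u ↦ ⋃_{e : u → v} S_e(K_v))` maps tuples of nonempty compact sets
to tuples of nonempty compact sets. A map with Lipschitz constant `c` moves Hausdorff distances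
by a factor at most `c`, and a finite union moves them no more than the worst of its pieces, so the
operator is a contraction for the sup metric on `V → NonemptyCompacts X`, with constant the largest
ratio. That space is complete, and the Banach fixed point theorem gives the unique attractor.
-/

open EMetric Metric TopologicalSpace Set
open scoped NNReal ENNReal

lemma exists_lipschitzWith_lt_one_of_dist_le {X E : Type*} [PseudoMetricSpace X] [Finite E]
    {S : E → X → X} {r : E → ℝ} (hr : ∀ e, r e < 1)
    (hS : ∀ e x y, dist (S e x) (S e y) ≤ r e * dist x y) :
    ∃ c : ℝ≥0, c < 1 ∧ ∀ e, LipschitzWith c (S e) := by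
  have : Nonempty (Iio (1 : ℝ≥0)) := ⟨⟨0, mem_Iio.2 zero_lt_one⟩⟩
  obtain ⟨⟨c, hc⟩, hrc⟩ :=
    Finite.exists_le fun e => (⟨(r e).toNNReal, by simpa using hr e⟩ : Iio (1 : ℝ≥0))
  refine ⟨c, hc, fun e => .of_dist_le_mul fun x y => (hS e x y).trans ?_⟩
  gcongr
  exact (Real.le_coe_toNNReal _).trans (NNReal.coe_le_coe.2 (hrc e))

section Lipschitz

variable {α β : Type*} [PseudoEMetricSpace α] [PseudoEMetricSpace β] {K : ℝ≥0} {f : α → β}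

lemma LipschitzWith.infEDist_image_le (hf : LipschitzWith K f) {t : Set α} (ht : t.Nonempty)
    (x : α) : infEDist (f x) (f '' t) ≤ K * infEDist x t := by
  have : Nonempty t := ht.to_subtype
  rw [infEDist, infEDist, iInf_image, iInf_subtype', iInf_subtype', ENNReal.mul_iInf (by simp)]
  exact iInf_mono fun y => hf x y

lemma LipschitzWith.hausdorffEDist_image_le (hf : LipschitzWith K f) {s t : Set α}
    (hs : s.Nonempty) (ht : t.Nonempty) :
    hausdorffEDist (f '' s) (f '' t) ≤ K * hausdorffEDist s t := by
  refine hausdorffEDist_le_of_infEDist ?_ ?_ <;> rintro _ ⟨x, hx, rfl⟩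
  · exact (hf.infEDist_image_le ht x).trans
      (mul_le_mul_right (infEDist_le_hausdorffEDist_of_mem hx) _)
  · rw [hausdorffEDist_comm]
    exact (hf.infEDist_image_le hs x).trans
      (mul_le_mul_right (infEDist_le_hausdorffEDist_of_mem hx) _)

end Lipschitz

section Hutchinson

variable {X V E : Type*} (src tgt : E → V) (S : E → X → X)

def hutchinson (K : V → Set X) (u : V) : Set X :=
  ⋃ e ∈ {e : E | src e = u}, S e '' K (tgt e)

variable {src tgt S}

lemma isCompact_hutchinson [TopologicalSpace X] [Finite E] (hS : ∀ e, Continuous (S e))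
    {K : V → Set X} (hK : ∀ v, IsCompact (K v)) (u : V) : IsCompact (hutchinson src tgt S K u) :=
  (toFinite _).isCompact_biUnion fun e _ => (hK (tgt e)).image (hS e)

lemma hutchinson_nonempty (hout : ∀ v, ∃ e, src e = v) {K : V → Set X}
    (hK : ∀ v, (K v).Nonempty) (u : V) : (hutchinson src tgt S K u).Nonempty := by
  obtain ⟨e, rfl⟩ := hout u
  obtain ⟨x, hx⟩ := hK (tgt e)
  exact ⟨S e x, mem_biUnion rfl ⟨x, hx, rfl⟩⟩

variable (src tgt S)

def hutchinsonCompacts [TopologicalSpace X] [Finite E] (hout : ∀ v, ∃ e, src e = v)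
    (hS : ∀ e, Continuous (S e)) (K : V → NonemptyCompacts X) (u : V) : NonemptyCompacts X :=
  ⟨⟨hutchinson src tgt S (fun v => K v) u, isCompact_hutchinson hS (fun v => (K v).isCompact) u⟩,
    hutchinson_nonempty hout (fun v => (K v).nonempty) u⟩

variable {src tgt S}

lemma lipschitzWith_hutchinsonCompacts [EMetricSpace X] [Fintype V] [Finite E]
    (hout : ∀ v, ∃ e, src e = v) {c : ℝ≥0} (hS : ∀ e, LipschitzWith c (S e)) :
    LipschitzWith c (hutchinsonCompacts src tgt S hout fun e => (hS e).continuous) := by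
  intro K L
  rw [edist_pi_le_iff]
  intro u
  calc hausdorffEDist (hutchinson src tgt S (fun v => K v) u)
        (hutchinson src tgt S (fun v => L v) u)
      ≤ ⨆ (e) (_ : src e = u), hausdorffEDist (S e '' K (tgt e)) (S e '' L (tgt e)) :=
        hausdorffEDist_iUnion_le.trans (iSup_mono fun _ => hausdorffEDist_iUnion_le)
    _ ≤ c * edist K L := iSup₂_le fun e _ =>
        ((hS e).hausdorffEDist_image_le (K _).nonempty (L _).nonempty).trans
          (mul_le_mul_right (edist_le_pi_edist K L (tgt e)) _)

theorem existsUnique_eq_hutchinson [MetricSpace X] [Nonempty X] [CompleteSpace X] [Fintype V]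
    [Finite E] (hout : ∀ v, ∃ e, src e = v) {c : ℝ≥0} (hc : c < 1)
    (hS : ∀ e, LipschitzWith c (S e)) :
    ∃! K : V → Set X, (∀ v, (K v).Nonempty ∧ IsCompact (K v)) ∧
      ∀ u, K u = hutchinson src tgt S K u := by
  set F := hutchinsonCompacts src tgt S hout fun e => (hS e).continuous
  have hF : ContractingWith c F := ⟨hc, lipschitzWith_hutchinsonCompacts hout hS⟩
  set A := hF.fixedPoint F
  have hA : F A = A := hF.fixedPoint_isFixedPt
  refine ⟨fun v => A v, ⟨fun v => ⟨(A v).nonempty, (A v).isCompact⟩,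
    fun u => congrArg (fun L => (L u : Set X)) hA.symm⟩, ?_⟩
  rintro K ⟨hK, hKfix⟩
  let K' : V → NonemptyCompacts X := fun v => ⟨⟨K v, (hK v).2⟩, (hK v).1⟩
  have hK' : Function.IsFixedPt F K' := funext fun u => NonemptyCompacts.ext (hKfix u).symm
  funext v
  exact congrArg (fun L => (L v : Set X)) (hF.fixedPoint_unique hK')

end Hutchinson

/-- existence and uniqueness of the attractor of a graph-directed
iterated function system in ℝⁿ: a finite directed graph in which every vertex has
an outgoing edge, each edge carrying a contracting similarity. -/
theorem stmt5 (n : ℕ) (V E : Type) [Fintype V] [Fintype E]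
    (src tgt : E → V) (hout : ∀ v, ∃ e, src e = v)
    (S : E → EuclideanSpace ℝ (Fin n) → EuclideanSpace ℝ (Fin n))
    (r : E → ℝ) (hr : ∀ e, r e < 1)
    (hS : ∀ e x y, dist (S e x) (S e y) = r e * dist x y) :
    ∃! K : V → Set (EuclideanSpace ℝ (Fin n)),
      (∀ v, (K v).Nonempty ∧ IsCompact (K v)) ∧
      ∀ u, K u = ⋃ e ∈ {e : E | src e = u}, S e '' K (tgt e) := by
  obtain ⟨c, hc, hlip⟩ := exists_lipschitzWith_lt_one_of_dist_le hr fun e x y => (hS e x y).le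
  exact existsUnique_eq_hutchinson hout hc hlip
end

section
/- Let β be a Pisot number, c ≥ 1 an integer, C = {-c,...,c}^n, and let X ⊆ ℝ^n be a finite union of components of the attractor of a graph-directed IFS all of whose similarities are of the form S_a(x) = (x+a)/β with a ∈ C. Then X is (β,C)-self-similar: the collection of sets N_{k,b}(X) = (β^k X − b) ∩ [-c/(β-1), c/(β-1)]^n, for k ∈ ℤ_{≥0} and b with coordinates in C^{<k}[β], is finite. -/
/-- The cube [-c/(β-1), c/(β-1)]ⁿ. -/
noncomputable def cube (n : ℕ) (c β : ℝ) : Set (Fin n → ℝ) :=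
  Set.Icc (fun _ => -(c / (β - 1))) (fun _ => c / (β - 1))

/-- The similarity S_a(x) = (x + a)/β on ℝⁿ. -/
noncomputable def Sa (n : ℕ) (β : ℝ) (a : Fin n → ℤ) : (Fin n → ℝ) → (Fin n → ℝ) :=
  fun x j => (x j + a j) / β

/-- Values of polynomials of degree < k in β with integer coefficients bounded by c. -/
def PolyVal (β : ℝ) (c : ℤ) (k : ℕ) : Set ℝ :=
  {b | ∃ a : ℕ → ℤ, (∀ i, |a i| ≤ c) ∧ b = ∑ i ∈ Finset.range k, (a i : ℝ) * β ^ i}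

/-- The (β,C)-kernel of X. -/
noncomputable def Kernel (n : ℕ) (β : ℝ) (c : ℤ) (X : Set (Fin n → ℝ)) :
    Set (Set (Fin n → ℝ)) :=
  {Y | ∃ (k : ℕ) (b : Fin n → ℝ), (∀ j, b j ∈ PolyVal β c k) ∧
    Y = ((fun x : Fin n → ℝ => fun j => β ^ k * x j - b j) '' X) ∩ cube n (c : ℝ) β}


/-! Iterating the attractor equation `k` times writes `β ^ k • K v` as a union of translates
`d +ᵥ K w`, where the coordinates of `d` are polynomials of degree `< k` in `β` with digits in
`{-c, …, c}`. So each point of `(β ^ k • X - b) ∩ cube` lies in a piece `(t +ᵥ K w) ∩ cube`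
contained in that set, with `t = d - b`. The coordinates of `t` are digit polynomials with digits
in `{-2c, …, 2c}`, and since both the point and `K w` lie in the cube, `|t j| ≤ 2c/(β-1)`. For
Pisot `β` there are only finitely many such values: they are algebraic integers of `ℚ(β)` all of
whose conjugates are bounded, by the geometric series `2c/(1-|β'|)` at the conjugates `|β'| < 1`.
Hence there are finitely many pieces, and each kernel set is a union of some of them. -/

open Pointwise

lemma finite_of_forall_exists_mem_subset {α : Type*} {𝒜 ℬ : Set (Set α)} (h𝒜 : 𝒜.Finite)
    (h : ∀ Y ∈ ℬ, ∀ y ∈ Y, ∃ P ∈ 𝒜, y ∈ P ∧ P ⊆ Y) : ℬ.Finite := by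
  refine (h𝒜.finite_subsets.image Set.sUnion).subset fun Y hY => ⟨{P ∈ 𝒜 | P ⊆ Y},
    fun P hP => hP.1, subset_antisymm (Set.sUnion_subset fun P hP => hP.2) fun y hy => ?_⟩
  obtain ⟨P, hP, hyP, hPY⟩ := h Y hY y hy
  exact ⟨P, ⟨hP, hPY⟩, hyP⟩

lemma norm_sum_mul_pow_le {R : Type*} [NormedRing R] [NormOneClass R] {z : R} (hz : ‖z‖ < 1)
    {w : ℕ → R} {d : ℝ} (hw : ∀ i, ‖w i‖ ≤ d) (k : ℕ) :
    ‖∑ i ∈ Finset.range k, w i * z ^ i‖ ≤ d / (1 - ‖z‖) := by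
  have hd : 0 ≤ d := (norm_nonneg _).trans (hw 0)
  calc ‖∑ i ∈ Finset.range k, w i * z ^ i‖ ≤ ∑ i ∈ Finset.range k, d * ‖z‖ ^ i :=
        (norm_sum_le _ _).trans <| Finset.sum_le_sum fun i _ =>
          (norm_mul_le _ _).trans (mul_le_mul (hw i) (norm_pow_le _ _) (norm_nonneg _) hd)
    _ = d * ∑ i ∈ Finset.range k, ‖z‖ ^ i := by rw [Finset.mul_sum]
    _ ≤ d * (1 / (1 - ‖z‖)) := by
        gcongr
        have := geom_sum_Ico_le_of_lt_one (m := 0) (n := k) (norm_nonneg z) hz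
        rwa [← Finset.range_eq_Ico, pow_zero] at this
    _ = d / (1 - ‖z‖) := mul_one_div _ _

namespace IsPisot

open IntermediateField Polynomial

variable {β : ℝ}

lemma embedding_gen_eq_or_norm_lt_one (hβ : IsPisot β) (φ : ℚ⟮β⟯ →+* ℂ) :
    φ (AdjoinSimple.gen ℚ β) = β ∨ ‖φ (AdjoinSimple.gen ℚ β)‖ < 1 := by
  refine or_iff_not_imp_left.2 (hβ.2.2 _ ?_)
  have hroot := aeval_gen_minpoly ℚ β
  rw [minpoly.isIntegrallyClosed_eq_field_fractions' ℚ hβ.2.1, aeval_map_algebraMap] at hroot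
  rw [show φ (AdjoinSimple.gen ℚ β) = φ.toIntAlgHom (AdjoinSimple.gen ℚ β) from rfl,
    aeval_algHom_apply, hroot, map_zero]

theorem finite_polyVal_abs_le (hβ : IsPisot β) (d : ℤ) (M : ℝ) :
    {t : ℝ | (∃ k, t ∈ PolyVal β d k) ∧ |t| ≤ M}.Finite := by
  have : FiniteDimensional ℚ ℚ⟮β⟯ := adjoin.finiteDimensional hβ.2.1.tower_top
  have : NumberField ℚ⟮β⟯ := ⟨⟩
  set g := AdjoinSimple.gen ℚ β
  obtain ⟨B, hB⟩ := (Set.finite_range fun φ : ℚ⟮β⟯ →+* ℂ => d / (1 - ‖φ g‖)).bddAbove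
  refine ((NumberField.Embeddings.finite_of_norm_le ℚ⟮β⟯ ℂ (max M B)).image
    (algebraMap ℚ⟮β⟯ ℝ)).subset ?_
  rintro t ⟨⟨k, a, ha, rfl⟩, htM⟩
  have hg : IsIntegral ℤ g := by
    rw [← isIntegral_algebraMap_iff (algebraMap ℚ⟮β⟯ ℝ).injective]; exact hβ.2.1
  refine ⟨∑ i ∈ Finset.range k, (a i : ℚ⟮β⟯) * g ^ i, ⟨?_, fun φ => ?_⟩, by simp [g]⟩
  · exact IsIntegral.sum _ fun i _ => (isIntegral_algebraMap (x := a i)).mul (hg.pow i)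
  · simp only [map_sum, map_mul, map_pow, map_intCast]
    rcases hβ.embedding_gen_eq_or_norm_lt_one φ with h | h
    · refine le_of_eq_of_le ?_ (htM.trans (le_max_left M B))
      rw [h, ← Real.norm_eq_abs, ← Complex.norm_real]
      push_cast
      rfl
    · have ha' (i : ℕ) : ‖(a i : ℂ)‖ ≤ d := by rw [Complex.norm_intCast]; exact_mod_cast ha i
      exact (norm_sum_mul_pow_le h ha' k).trans ((hB ⟨φ, rfl⟩).trans (le_max_right _ _))

end IsPisot

section PolyVal

variable {β : ℝ} {c : ℤ} {k : ℕ}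

lemma zero_mem_polyVal (hc : 0 ≤ c) : (0 : ℝ) ∈ PolyVal β c 0 :=
  ⟨0, fun _ => by simpa using hc, by simp⟩

lemma add_mul_pow_mem_polyVal {b : ℝ} (hb : b ∈ PolyVal β c k) {a : ℤ} (ha : |a| ≤ c) :
    b + a * β ^ k ∈ PolyVal β c (k + 1) := by
  obtain ⟨A, hA, rfl⟩ := hb
  refine ⟨Function.update A k a, fun i => ?_, ?_⟩
  · rcases eq_or_ne i k with rfl | hi <;> simp [*]
  · rw [Finset.sum_range_succ, Function.update_self]
    congr 1
    exact Finset.sum_congr rfl fun i hi =>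
      by rw [Function.update_of_ne (Finset.mem_range.1 hi).ne]

lemma sub_mem_polyVal {b b' : ℝ} (hb : b ∈ PolyVal β c k) (hb' : b' ∈ PolyVal β c k) :
    b - b' ∈ PolyVal β (2 * c) k := by
  obtain ⟨A, hA, rfl⟩ := hb
  obtain ⟨A', hA', rfl⟩ := hb'
  refine ⟨A - A', fun i => (abs_sub _ _).trans (by linarith [hA i, hA' i]), ?_⟩
  rw [← Finset.sum_sub_distrib]
  push_cast [Pi.sub_apply, sub_mul]
  rfl

end PolyVal

lemma cube_eq_closedBall (n : ℕ) {c β : ℝ} (h : 0 ≤ c / (β - 1)) :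
    cube n c β = Metric.closedBall 0 (c / (β - 1)) := by
  rw [closedBall_pi _ h, cube, ← Set.pi_univ_Icc]
  simp [Real.closedBall_eq_Icc]

lemma abs_le_of_mem_cube {n : ℕ} {c β : ℝ} {x : Fin n → ℝ} (hx : x ∈ cube n c β) (j : Fin n) :
    |x j| ≤ c / (β - 1) :=
  abs_le.2 ⟨hx.1 j, hx.2 j⟩

lemma norm_Sa_le {n : ℕ} {β : ℝ} (hβ : 0 < β) {c : ℤ} (hc : 0 ≤ c) {a : Fin n → ℤ}
    (ha : ∀ j, |a j| ≤ c) (x : Fin n → ℝ) : ‖Sa n β a x‖ ≤ (‖x‖ + c) / β := by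
  refine (pi_norm_le_iff_of_nonneg (by positivity)).2 fun j => ?_
  rw [Sa, norm_div, Real.norm_of_nonneg hβ.le]
  gcongr
  refine (norm_add_le _ _).trans (add_le_add (norm_le_pi_norm x j) ?_)
  rw [Real.norm_eq_abs]
  exact_mod_cast ha j

lemma smul_Sa {n : ℕ} {β : ℝ} (hβ : β ≠ 0) (a : Fin n → ℤ) (x : Fin n → ℝ) (k : ℕ) :
    β ^ (k + 1) • Sa n β a x = β ^ k • x + fun j => a j * β ^ k := by
  ext j
  simp only [Sa, Pi.add_apply, Pi.smul_apply, smul_eq_mul]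
  field_simp
  ring

section GraphDirected

variable {n : ℕ} {β : ℝ} {c : ℤ} {V E : Type*} {src tgt : E → V} {lab : E → Fin n → ℤ}
  {K : V → Set (Fin n → ℝ)}

lemma mem_iff_exists_Sa
    (hattr : ∀ u, K u = ⋃ e ∈ {e : E | src e = u}, Sa n β (lab e) '' K (tgt e)) {u : V}
    {x : Fin n → ℝ} : x ∈ K u ↔ ∃ e, src e = u ∧ ∃ z ∈ K (tgt e), Sa n β (lab e) z = x := by
  rw [hattr u]
  simp

lemma attractor_subset_closedBall [Finite V] (hβ : 1 < β) (hc : 0 ≤ c)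
    (hlab : ∀ e j, |lab e j| ≤ c)
    (hattr : ∀ u, K u = ⋃ e ∈ {e : E | src e = u}, Sa n β (lab e) '' K (tgt e))
    (hK : ∀ v, Bornology.IsBounded (K v)) (v : V) :
    K v ⊆ Metric.closedBall 0 (c / (β - 1)) := by
  have hβ0 : 0 < β := zero_lt_one.trans hβ
  have hρ : 0 ≤ (c : ℝ) / (β - 1) := div_nonneg (Int.cast_nonneg hc) (sub_nonneg.2 hβ.le)
  -- `c / (β - 1)` is the fixed point of `r ↦ (r + c) / β`; the excess `R` over it shrinks by `β`.
  obtain ⟨R, hR⟩ := (Metric.isBounded_iff_subset_closedBall 0).1 (Bornology.isBounded_iUnion.2 hK)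
  have hbound : ∀ m : ℕ, ∀ v, ∀ x ∈ K v, ‖x‖ ≤ c / (β - 1) + R * β⁻¹ ^ m := by
    intro m
    induction m with
    | zero =>
      intro v x hx
      have := mem_closedBall_zero_iff.1 (hR (Set.mem_iUnion_of_mem v hx))
      simp only [pow_zero, mul_one]
      linarith
    | succ m ih =>
      intro v x hx
      obtain ⟨e, -, z, hz, rfl⟩ := (mem_iff_exists_Sa hattr).1 hx
      calc ‖Sa n β (lab e) z‖ ≤ (‖z‖ + c) / β := norm_Sa_le hβ0 hc (hlab e) z
        _ ≤ (c / (β - 1) + R * β⁻¹ ^ m + c) / β := by gcongr; exact ih _ z hz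
        _ = c / (β - 1) + R * β⁻¹ ^ (m + 1) := by
          rw [pow_succ, ← div_eq_mul_inv, mul_div_assoc']
          field_simp [(sub_pos.2 hβ).ne']
          ring
  intro x hx
  rw [mem_closedBall_zero_iff]
  have hlim := tendsto_const_nhds (x := (c : ℝ) / (β - 1)) |>.add <|
    (tendsto_pow_atTop_nhds_zero_of_lt_one (inv_nonneg.2 hβ0.le)
      (inv_lt_one_of_one_lt₀ hβ)).const_mul R
  rw [mul_zero, add_zero] at hlim
  exact ge_of_tendsto' hlim fun m => hbound m v x hx

lemma exists_vadd_subset_smul (hβ : β ≠ 0) (hc : 0 ≤ c) (hlab : ∀ e j, |lab e j| ≤ c)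
    (hattr : ∀ u, K u = ⋃ e ∈ {e : E | src e = u}, Sa n β (lab e) '' K (tgt e)) (k : ℕ) :
    ∀ v, ∀ x ∈ K v, ∃ (w : V) (d : Fin n → ℝ), (∀ j, d j ∈ PolyVal β c k) ∧
      β ^ k • x ∈ d +ᵥ K w ∧ d +ᵥ K w ⊆ β ^ k • K v := by
  induction k with
  | zero =>
    intro v x hx
    exact ⟨v, 0, fun _ => zero_mem_polyVal hc, by simpa using hx, by simp⟩
  | succ k ih =>
    intro v x hx
    obtain ⟨e, he, z, hz, rfl⟩ := (mem_iff_exists_Sa hattr).1 hx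
    obtain ⟨w, d, hd, ⟨y, hy, hzy⟩, hsub⟩ := ih _ z hz
    refine ⟨w, d + fun j => lab e j * β ^ k, fun j => add_mul_pow_mem_polyVal (hd j) (hlab e j),
      ⟨y, hy, ?_⟩, ?_⟩
    · dsimp only at hzy ⊢
      rw [smul_Sa hβ, ← hzy, vadd_eq_add, vadd_eq_add]
      abel
    · rintro _ ⟨y', hy', rfl⟩
      obtain ⟨z', hz', hzy'⟩ := hsub (Set.vadd_mem_vadd_set hy')
      refine ⟨Sa n β (lab e) z', (mem_iff_exists_Sa hattr).2 ⟨e, he, z', hz', rfl⟩, ?_⟩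
      dsimp only at hzy' ⊢
      rw [smul_Sa hβ, hzy', vadd_eq_add, vadd_eq_add]
      abel

lemma exists_vadd_subset_smul_sub (hβ : 1 < β) (hc : 0 ≤ c) (hlab : ∀ e j, |lab e j| ≤ c)
    (hattr : ∀ u, K u = ⋃ e ∈ {e : E | src e = u}, Sa n β (lab e) '' K (tgt e))
    (hK : ∀ v, K v ⊆ cube n c β) {k : ℕ} {b : Fin n → ℝ} (hb : ∀ j, b j ∈ PolyVal β c k)
    {v : V} {x : Fin n → ℝ} (hx : x ∈ K v) (hxb : β ^ k • x - b ∈ cube n c β) :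
    ∃ (w : V) (t : Fin n → ℝ),
      (∀ j, t j ∈ {s | (∃ k, s ∈ PolyVal β (2 * c) k) ∧ |s| ≤ 2 * (c / (β - 1))}) ∧
      β ^ k • x - b ∈ t +ᵥ K w ∧ t +ᵥ K w ⊆ (fun x => β ^ k • x - b) '' K v := by
  obtain ⟨w, d, hd, hxd, hsub⟩ :=
    exists_vadd_subset_smul (zero_lt_one.trans hβ).ne' hc hlab hattr k v x hx
  obtain ⟨z, hz, hdz⟩ := Set.mem_vadd_set.1 hxd
  have hxz : β ^ k • x - b = z + (d - b) := by
    rw [← hdz, vadd_eq_add]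
    abel
  refine ⟨w, d - b, fun j => ⟨⟨k, sub_mem_polyVal (hd j) (hb j)⟩, ?_⟩,
    ⟨z, hz, (hxz.trans (add_comm _ _)).symm⟩, ?_⟩
  · calc |(d - b) j| = |(β ^ k • x - b) j - z j| := by rw [hxz]; simp
      _ ≤ |(β ^ k • x - b) j| + |z j| := abs_sub _ _
      _ ≤ c / (β - 1) + c / (β - 1) :=
        add_le_add (abs_le_of_mem_cube hxb j) (abs_le_of_mem_cube (hK w hz) j)
      _ = 2 * (c / (β - 1)) := (two_mul _).symm
  · rintro _ ⟨z', hz', rfl⟩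
    obtain ⟨x', hx', hxz'⟩ := Set.mem_smul_set.1 (hsub (Set.vadd_mem_vadd_set hz'))
    refine ⟨x', hx', ?_⟩
    dsimp only
    rw [hxz', vadd_eq_add, vadd_eq_add]
    abel

end GraphDirected

theorem stmt10_general (n : ℕ) (β : ℝ) (hβ : IsPisot β) (c : ℤ) (hc : 1 ≤ c)
    (V E : Type) [Fintype V] (src tgt : E → V)
    (lab : E → Fin n → ℤ) (hlab : ∀ e j, |lab e j| ≤ c)
    (K : V → Set (Fin n → ℝ))
    (hKc : ∀ v, IsCompact (K v))
    (hattr : ∀ u, K u = ⋃ e ∈ {e : E | src e = u}, Sa n β (lab e) '' K (tgt e))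
    (I : Finset V) (X : Set (Fin n → ℝ)) (hX : X = ⋃ v ∈ I, K v) :
    (Kernel n β c X).Finite := by
  have hc0 : 0 ≤ c := zero_le_one.trans hc
  have hρ : 0 ≤ (c : ℝ) / (β - 1) := div_nonneg (Int.cast_nonneg hc0) (sub_nonneg.2 hβ.1.le)
  have hK (v : V) : K v ⊆ cube n c β := cube_eq_closedBall n hρ ▸
    attractor_subset_closedBall hβ.1 hc0 hlab hattr (fun v => (hKc v).isBounded) v
  have hT := Set.Finite.pi' fun _ : Fin n => hβ.finite_polyVal_abs_le (2 * c) (2 * (c / (β - 1)))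
  refine finite_of_forall_exists_mem_subset ((Set.finite_univ.prod hT).image
    fun p : V × (Fin n → ℝ) => (p.2 +ᵥ K p.1) ∩ cube n c β) ?_
  rintro _ ⟨k, b, hb, rfl⟩ _ ⟨⟨x, hxX, rfl⟩, hy⟩
  obtain ⟨v, hv, hx⟩ : ∃ v ∈ I, x ∈ K v := by simpa [hX] using hxX
  obtain ⟨w, t, ht, hxt, hsub⟩ := exists_vadd_subset_smul_sub hβ.1 hc0 hlab hattr hK hb hx hy
  refine ⟨_, ⟨(w, t), ⟨trivial, ht⟩, rfl⟩, ⟨hxt, hy⟩,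
    Set.inter_subset_inter_left _ (hsub.trans (Set.image_mono ?_))⟩
  rw [hX]
  exact Set.subset_biUnion_of_mem hv

/-- for β Pisot, a finite union X of components of the attractor of
a GDIFS whose similarities are S_a(x) = (x+a)/β with a ∈ Cⁿ is (β,C)-self-similar:
its (β,C)-kernel is finite. -/
theorem stmt10 (n : ℕ) (β : ℝ) (hβ : IsPisot β) (c : ℤ) (hc : 1 ≤ c)
    (V E : Type) [Fintype V] [Fintype E] (src tgt : E → V)
    (hout : ∀ v, ∃ e, src e = v)
    (lab : E → Fin n → ℤ) (hlab : ∀ e j, |lab e j| ≤ c)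
    (K : V → Set (Fin n → ℝ))
    (hKne : ∀ v, (K v).Nonempty) (hKc : ∀ v, IsCompact (K v))
    (hattr : ∀ u, K u = ⋃ e ∈ {e : E | src e = u}, Sa n β (lab e) '' K (tgt e))
    (I : Finset V) (X : Set (Fin n → ℝ)) (hX : X = ⋃ v ∈ I, K v) :
    (Kernel n β c X).Finite :=
  stmt10_general n β hβ c hc V E src tgt lab hlab K hKc hattr I X hX
end

section
/- Let b ≥ 2 be an integer and let X ⊆ [0,1]^n be a finite union of closed polyhedra whose vertices have rational coordinates. Then X is b-self-similar: the b-kernel of X, i.e., the collection of sets (b^k X − a) ∩ [0,1]^n over k ≥ 0 and a ∈ ℤ^n with 0 ≤ a_i < b^k, is finite. -/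
/-!
Clearing denominators, every polyhedron in the union is cut out by constraints `c ⬝ᵥ x ≤ r` with
`c` and `r` integral. Since `x ↦ b^k x - a` is invertible, the kernel element `(b^k X - a) ∩ [0,1]^n`
is the same union of polyhedra with the same `c` and new integral right-hand sides
`b^k r - c ⬝ᵥ a`, intersected with the cube. On the cube `c ⬝ᵥ y` ranges in `[-B, B]` with
`B = ∑ |c_j|`, so a right-hand side can be clamped to the integer interval `[-B-1, B]` without
changing the set; only finitely many choices remain.
-/

open Set

lemma setOf_le_inter_eq_clamp {α β : Type*} [LinearOrder β] {f : α → β} {K : Set α} {lo hi : β}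
    (hf : ∀ x ∈ K, lo < f x ∧ f x ≤ hi) (r : β) :
    {x | f x ≤ r} ∩ K = {x | f x ≤ max lo (min hi r)} ∩ K := by
  ext x
  simp only [mem_inter_iff, mem_ofPred_eq, and_congr_left_iff]
  intro hx
  obtain ⟨hlo, hhi⟩ := hf x hx
  constructor
  · exact fun h => le_max_of_le_right (le_min hhi h)
  · intro h
    rcases le_max_iff.mp h with h | h
    · exact absurd h (not_le.mpr hlo)
    · exact h.trans (min_le_right _ _)

lemma iUnion_iInter_inter_congr {α P : Type*} {H : P → Type*} {S T : (p : P) → H p → Set α}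
    {K : Set α} (h : ∀ p i, S p i ∩ K = T p i ∩ K) :
    (⋃ p, ⋂ i, S p i) ∩ K = (⋃ p, ⋂ i, T p i) ∩ K := by
  ext x
  simp only [mem_inter_iff, mem_iUnion, mem_iInter, and_congr_left_iff]
  intro hx
  have hST : ∀ p i, x ∈ S p i ↔ x ∈ T p i := fun p i => by
    simpa [hx] using Set.ext_iff.mp (h p i) x
  simp only [hST]

lemma Rat.exists_int_eq_mul_of_den_dvd {q : ℚ} {D : ℕ} (h : q.den ∣ D) :
    ∃ m : ℤ, (D : ℚ) * q = m := by
  obtain ⟨e, rfl⟩ := h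
  exact ⟨q.num * e, by push_cast; rw [← q.mul_den_eq_num]; ring⟩

variable {ι : Type*} [Fintype ι]

lemma exists_int_setOf_dotProduct_le_eq (c : ι → ℚ) (r : ℚ) :
    ∃ (c' : ι → ℤ) (r' : ℤ), {x : ι → ℝ | (fun j => (c j : ℝ)) ⬝ᵥ x ≤ r} =
      {x | (fun j => (c' j : ℝ)) ⬝ᵥ x ≤ r'} := by
  set D := r.den * ∏ j, (c j).den
  have hD : (0 : ℝ) < D := by positivity
  choose c' hc' using fun j =>
    Rat.exists_int_eq_mul_of_den_dvd (dvd_mul_of_dvd_right (Finset.dvd_prod_of_mem _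
      (Finset.mem_univ j)) r.den : (c j).den ∣ D)
  obtain ⟨r', hr'⟩ := Rat.exists_int_eq_mul_of_den_dvd (dvd_mul_right r.den _ : r.den ∣ D)
  refine ⟨c', r', ?_⟩
  ext x
  have hcast : ∀ q : ℚ, ∀ m : ℤ, (D : ℚ) * q = m → (m : ℝ) = D * q := fun q m h => by
    exact_mod_cast h.symm
  simp only [mem_ofPred_eq, dotProduct, hcast _ _ (hc' _), hcast _ _ hr', mul_assoc,
    ← Finset.mul_sum, mul_le_mul_iff_right₀ hD]

lemma preimage_affine_setOf_dotProduct_le {s : ℝ} (hs : 0 < s) (a c : ι → ℝ) (r : ℝ) :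
    (fun y => s⁻¹ • (y + a)) ⁻¹' {x | c ⬝ᵥ x ≤ r} = {y | c ⬝ᵥ y ≤ s * r - c ⬝ᵥ a} := by
  ext y
  simp only [mem_preimage, mem_ofPred_eq, dotProduct_smul, dotProduct_add, smul_eq_mul,
    inv_mul_le_iff₀ hs, le_sub_iff_add_le]

lemma abs_dotProduct_le_of_mem_Icc (c x : ι → ℝ) (hx : x ∈ Icc 0 1) :
    |c ⬝ᵥ x| ≤ ∑ j, |c j| :=
  (Finset.abs_sum_le_sum_abs _ _).trans <| Finset.sum_le_sum fun j _ => by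
    rw [abs_mul]
    exact mul_le_of_le_one_right (abs_nonneg _) ((abs_of_nonneg (hx.1 j)).trans_le (hx.2 j))

lemma finite_setOf_iUnion_iInter_int_halfSpace_inter_Icc {P : Type*} [Finite P] {H : P → Type*}
    [∀ p, Finite (H p)] (c : (p : P) → H p → ι → ℤ) :
    {Y : Set (ι → ℝ) | ∃ R : (p : P) → H p → ℤ,
      Y = (⋃ p, ⋂ i, {x | (fun j => (c p i j : ℝ)) ⬝ᵥ x ≤ R p i}) ∩ Icc 0 1}.Finite := by
  set B : (p : P) → H p → ℤ := fun p i => ∑ j, |c p i j| with hB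
  have hB_nonneg : ∀ p i, 0 ≤ B p i := fun p i => Finset.sum_nonneg fun j _ => abs_nonneg _
  refine ((Set.Finite.pi fun p => Set.Finite.pi fun i =>
    Set.finite_Icc (-(B p i + 1)) (B p i)).image fun R =>
      (⋃ p, ⋂ i, {x | (fun j => (c p i j : ℝ)) ⬝ᵥ x ≤ R p i}) ∩ Icc 0 1).subset ?_
  rintro Y ⟨R, rfl⟩
  refine ⟨fun p i => max (-(B p i + 1)) (min (B p i) (R p i)), ?_, ?_⟩
  · intro p _ i _
    exact ⟨le_max_left _ _, max_le (by linarith [hB_nonneg p i]) (min_le_left _ _)⟩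
  refine iUnion_iInter_inter_congr fun p i => ?_
  push_cast
  refine (setOf_le_inter_eq_clamp (fun x hx => ?_) _).symm
  have := abs_le.mp (abs_dotProduct_le_of_mem_Icc (fun j => (c p i j : ℝ)) x hx)
  simp only [hB, Int.cast_sum, Int.cast_abs]
  constructor <;> linarith

theorem stmt18_general (n b : ℕ) (hb : 2 ≤ b)
    (N : ℕ) (M : Fin N → ℕ)
    (coef : (p : Fin N) → Fin (M p) → Fin n → ℚ)
    (rhs : (p : Fin N) → Fin (M p) → ℚ)
    (X : Set (Fin n → ℝ))
    (hX : X = ⋃ p : Fin N, ⋂ h : Fin (M p),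
      {x : Fin n → ℝ | ∑ j, (coef p h j : ℝ) * x j ≤ (rhs p h : ℝ)}) :
    Set.Finite {Y : Set (Fin n → ℝ) | ∃ (k : ℕ) (a : Fin n → ℤ),
      (∀ j, 0 ≤ a j ∧ a j < (b : ℤ) ^ k) ∧
      Y = ((fun x : Fin n → ℝ => fun j => (b : ℝ) ^ k * x j - (a j : ℝ)) '' X) ∩
        Set.Icc (fun _ => (0 : ℝ)) (fun _ => 1)} := by
  choose c r hcr using fun p h => exists_int_setOf_dotProduct_le_eq (coef p h) (rhs p h)
  have hX' : X = ⋃ p, ⋂ h, {x | (fun j => (c p h j : ℝ)) ⬝ᵥ x ≤ r p h} :=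
    hX.trans (iUnion_congr fun p => iInter_congr fun h => hcr p h)
  refine (finite_setOf_iUnion_iInter_int_halfSpace_inter_Icc c).subset ?_
  rintro Y ⟨k, a, -, rfl⟩
  have hs : (0 : ℝ) < (b : ℝ) ^ k := pow_pos (by exact_mod_cast (by omega : 0 < b)) k
  have himage : (fun x j => (b : ℝ) ^ k * x j - a j) '' X =
      (fun y => ((b : ℝ) ^ k)⁻¹ • (y + fun j => (a j : ℝ))) ⁻¹' X := by
    refine congrFun (image_eq_preimage_of_inverse ?_ ?_) X <;> intro x <;> ext j <;>
      simp [hs.ne']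
  refine ⟨fun p h => b ^ k * r p h - ∑ j, c p h j * a j, ?_⟩
  rw [himage, hX']
  simp only [preimage_iUnion, preimage_iInter, preimage_affine_setOf_dotProduct_le hs]
  push_cast
  rfl

/-- a finite union X ⊆ [0,1]ⁿ of closed rational polyhedra (finite
intersections of rational half-spaces) is b-self-similar: its b-kernel
{(b^k X - a) ∩ [0,1]ⁿ : k ≥ 0, 0 ≤ a_j < b^k} is finite. -/
theorem stmt18 (n b : ℕ) (hb : 2 ≤ b)
    (N : ℕ) (M : Fin N → ℕ)
    (coef : (p : Fin N) → Fin (M p) → Fin n → ℚ)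
    (rhs : (p : Fin N) → Fin (M p) → ℚ)
    (X : Set (Fin n → ℝ))
    (hX : X = ⋃ p : Fin N, ⋂ h : Fin (M p),
      {x : Fin n → ℝ | ∑ j, (coef p h j : ℝ) * x j ≤ (rhs p h : ℝ)})
    (hXsub : X ⊆ Set.Icc (fun _ => (0 : ℝ)) (fun _ => 1)) :
    Set.Finite {Y : Set (Fin n → ℝ) | ∃ (k : ℕ) (a : Fin n → ℤ),
      (∀ j, 0 ≤ a j ∧ a j < (b : ℤ) ^ k) ∧
      Y = ((fun x : Fin n → ℝ => fun j => (b : ℝ) ^ k * x j - (a j : ℝ)) '' X) ∩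
        Set.Icc (fun _ => (0 : ℝ)) (fun _ => 1)} :=
  stmt18_general n b hb N M coef rhs X hX
end
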